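/- Equivalence of LP-Struct and LP-Unif after realizability transformation: for any logic program Φ and query A[y] with y fresh, F(Φ) ⊢ {A[y]} ⇝* ∅ (the query succeeds by LP-Unif reduction) if and only if F(Φ) ⊢ {A[y]} (→^ν·↪^1)* ∅ (the query succeeds by LP-Struct reduction, i.e. by iterating: reduce to term-matching normal form, then perform at most one substitutional step). -/

import Mathlib

namespace SRes

/-- First-order terms: variables and function symbols applied to lists of terms. -/
inductive Tm : Type where
  | var : ℕ → Tm
  | fn : ℕ → List Tm → Tm

/-- First-order substitutions. -/
abbrev Subst := ℕ → Tm

/-- Applying a substitution to a term. -/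
def Tm.subst (σ : Subst) : Tm → Tm
  | .var x => σ x
  | .fn f ts => .fn f (ts.attach.map (fun t => Tm.subst σ t.1))
decreasing_by
  have := List.sizeOf_lt_of_mem t.2
  simp only [Tm.fn.sizeOf_spec]
  omega

/-- The identity substitution. -/
def Subst.id : Subst := Tm.var

/-- Composition of substitutions: `(Subst.comp θ γ) x = θ(γ(x))`. -/
def Subst.comp (θ γ : Subst) : Subst := fun x => (γ x).subst θ

/-- Free variables of a term. -/
def Tm.fv : Tm → Finset ℕ
  | .var x => {x}
  | .fn _ ts => (ts.attach.map (fun t => Tm.fv t.1)).foldr (· ∪ ·) ∅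
decreasing_by
  have := List.sizeOf_lt_of_mem t.2
  simp only [Tm.fn.sizeOf_spec]
  omega

/-- Function symbols occurring in a term. -/
def Tm.fns : Tm → Finset ℕ
  | .var _ => ∅
  | .fn f ts => insert f ((ts.attach.map (fun t => Tm.fns t.1)).foldr (· ∪ ·) ∅)
decreasing_by
  have := List.sizeOf_lt_of_mem t.2
  simp only [Tm.fn.sizeOf_spec]
  omega

/-- Atomic formulas `P(t1,...,tn)`. -/
structure Atom : Type where
  pred : ℕ
  args : List Tm

def Atom.subst (σ : Subst) (A : Atom) : Atom := ⟨A.pred, A.args.map (Tm.subst σ)⟩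

def Atom.fv (A : Atom) : Finset ℕ := (A.args.map Tm.fv).foldr (· ∪ ·) ∅

def Atom.fns (A : Atom) : Finset ℕ := (A.args.map Tm.fns).foldr (· ∪ ·) ∅

/-- Renaming the variables of an atom. -/
def Atom.rename (ρ : ℕ → ℕ) (A : Atom) : Atom := A.subst (fun x => .var (ρ x))

/-- `A.ext t'` is `A[t']`: add `t'` as an extra last argument of `A`. -/
def Atom.ext (A : Atom) (t : Tm) : Atom := ⟨A.pred, A.args ++ [t]⟩

def listFV (As : List Atom) : Finset ℕ := (As.map Atom.fv).foldr (· ∪ ·) ∅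

def listFns (As : List Atom) : Finset ℕ := (As.map Atom.fns).foldr (· ∪ ·) ∅

/-- Free variables of a multiset of atoms. -/
def mFV (G : Multiset Atom) : Finset ℕ := (G.map Atom.fv).sup

/-- A logic program: a finite list of axioms `κ : ∀x̄. body ⇒ head`
(each axiom is implicitly universally closed). -/
abbrev Prog := List (ℕ × List Atom × Atom)

def progFns (Φ : Prog) : Finset ℕ :=
  (Φ.map (fun r => r.2.2.fns ∪ listFns r.2.1)).foldr (· ∪ ·) ∅

/-! ### Proof terms (de Bruijn representation for bound proof variables) -/

inductive Pf : Type where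
  | const : ℕ → Pf           -- proof-term constants κ
  | bvar : ℕ → Pf            -- proof-term variables a (de Bruijn)
  | lam : Pf → Pf            -- λa.e
  | app : Pf → Pf → Pf       -- e e'

/-- Lift de Bruijn indices `≥ c` by `d`. -/
def Pf.lift (c d : ℕ) : Pf → Pf
  | .const k => .const k
  | .bvar i => if i < c then .bvar i else .bvar (i + d)
  | .lam p => .lam (p.lift (c+1) d)
  | .app p q => .app (p.lift c d) (q.lift c d)

/-- Substitute `q` for de Bruijn index `k` in a proof term. -/
def Pf.subst (k : ℕ) (q : Pf) : Pf → Pf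
  | .const c => .const c
  | .bvar i => if i < k then .bvar i else if i = k then q.lift 0 k else .bvar (i - 1)
  | .lam p => .lam (Pf.subst (k+1) q p)
  | .app p p' => .app (Pf.subst k q p) (Pf.subst k q p')

/-- Beta-reduction on proof terms: congruence closure of `(λa.p) p' →β [p'/a]p`. -/
inductive Beta : Pf → Pf → Prop where
  | beta (p q : Pf) : Beta (.app (.lam p) q) (p.subst 0 q)
  | appL {p p' q : Pf} : Beta p p' → Beta (.app p q) (.app p' q)
  | appR {p q q' : Pf} : Beta q q' → Beta (.app p q) (.app p q')
  | lam {p p' : Pf} : Beta p p' → Beta (.lam p) (.lam p')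

/-- A proof term is strongly normalizing if every β-reduction sequence from it is finite. -/
def Pf.SN (p : Pf) : Prop := Acc (fun a b => Beta b a) p

/-- β-normal proof terms. -/
def Pf.Normal (p : Pf) : Prop := ∀ q, ¬ Beta p q

/-- First-order proof terms: built from constants and variables by application only. -/
inductive Pf.FirstOrder : Pf → Prop where
  | const (κ : ℕ) : Pf.FirstOrder (.const κ)
  | bvar (a : ℕ) : Pf.FirstOrder (.bvar a)
  | app {p q : Pf} : Pf.FirstOrder p → Pf.FirstOrder q → Pf.FirstOrder (.app p q)

/-- `Pf.lams k p` is `λa1...λak. p`. -/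
def Pf.lams : ℕ → Pf → Pf
  | 0, p => p
  | n+1, p => .lam (Pf.lams n p)

/-- Apply a proof term to a list of proof terms, left associated. -/
def Pf.apps (p : Pf) : List Pf → Pf
  | [] => p
  | q :: qs => Pf.apps (.app p q) qs

/-- The proof term `λā.λb̄.(e2 b̄)(e1 ā)` produced by the cut rule
(`n` is the length of `ā`, `m` the length of `b̄`). -/
def cutTerm (n m : ℕ) (e₁ e₂ : Pf) : Pf :=
  Pf.lams (n + m) <|
    .app (Pf.apps (e₂.lift 0 (n+m)) ((List.range m).map (fun j => Pf.bvar (m - 1 - j))))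
         (Pf.apps (e₁.lift 0 (n+m)) ((List.range n).map (fun j => Pf.bvar (n + m - 1 - j))))

/-! ### Horn formulas as types -/

/-- Horn formulas `A1,...,An ⇒ B`, either unquantified (`horn`)
or universally closed over all their free term variables (`all`). -/
inductive Formula : Type where
  | horn : List Atom → Atom → Formula
  | all : List Atom → Atom → Formula

/-- The Horn-formulas-as-types typing judgment `e : F` relative to a program `Φ`. -/
inductive Derives (Φ : Prog) : Pf → Formula → Prop where
  | ax {κ : ℕ} {body : List Atom} {head : Atom} :
      (κ, body, head) ∈ Φ → Derives Φ (.const κ) (.all body head)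
  | gen {e : Pf} {body : List Atom} {head : Atom} :
      Derives Φ e (.horn body head) → Derives Φ e (.all body head)
  | inst {e : Pf} {body : List Atom} {head : Atom} (σ : Subst) :
      Derives Φ e (.all body head) →
      Derives Φ e (.horn (body.map (Atom.subst σ)) (head.subst σ))
  | cut {e₁ e₂ : Pf} {As Bs : List Atom} {D C : Atom} :
      Derives Φ e₁ (.horn As D) → Derives Φ e₂ (.horn (Bs ++ [D]) C) →
      Derives Φ (cutTerm As.length Bs.length e₁ e₂) (.horn (As ++ Bs) C)

/-! ### Reductions -/

def Unifies (γ : Subst) (A B : Atom) : Prop := A.subst γ = B.subst γ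

/-- `γ` is a most general unifier of `A` and `B`. -/
def IsMGU (γ : Subst) (A B : Atom) : Prop :=
  Unifies γ A B ∧ ∀ δ, Unifies δ A B → ∃ θ, δ = Subst.comp θ γ

/-- `(body, head)` is a freshly renamed copy of the axiom `κ` of `Φ`,
whose variables do not occur in the goal multiset `G`. -/
def FreshRuleFor (Φ : Prog) (κ : ℕ) (G : Multiset Atom)
    (body : List Atom) (head : Atom) : Prop :=
  ∃ (body₀ : List Atom) (head₀ : Atom) (ρ : ℕ → ℕ),
    (κ, body₀, head₀) ∈ Φ ∧ Function.Injective ρ ∧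
    body = body₀.map (Atom.rename ρ) ∧ head = head₀.rename ρ ∧
    Disjoint (listFV body ∪ head.fv) (mFV G)

/-- Term-matching (LP-TM) reduction step via axiom `κ`:
replace `Ai = σC` by `σB1,...,σBm`. -/
def TMStep (Φ : Prog) (κ : ℕ) (G G' : Multiset Atom) : Prop :=
  ∃ (body : List Atom) (head : Atom) (σ : Subst) (rest : Multiset Atom),
    (κ, body, head) ∈ Φ ∧ G = (head.subst σ) ::ₘ rest ∧
    G' = ↑(body.map (Atom.subst σ)) + rest

def TMred (Φ : Prog) (G G' : Multiset Atom) : Prop := ∃ κ, TMStep Φ κ G G'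

/-- `G` is in term-matching normal form. -/
def TMNF (Φ : Prog) (G : Multiset Atom) : Prop := ∀ G', ¬ TMred Φ G G'

/-- `Φ` is productive: every term-matching reduction sequence is finite. -/
def Productive (Φ : Prog) : Prop := ∀ G, Acc (fun a b => TMred Φ b a) G

/-- Unification (LP-Unif) reduction step via axiom `κ` with most general unifier `γ`. -/
def UnifStepL (Φ : Prog) (κ : ℕ) (γ : Subst) (G G' : Multiset Atom) : Prop :=
  ∃ (A : Atom) (rest : Multiset Atom) (body : List Atom) (head : Atom),
    G = A ::ₘ rest ∧ FreshRuleFor Φ κ G body head ∧ IsMGU γ head A ∧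
    G' = ↑(body.map (Atom.subst γ)) + rest.map (Atom.subst γ)

/-- Substitutional reduction step via axiom `κ` with most general unifier `γ`. -/
def SubStepL (Φ : Prog) (κ : ℕ) (γ : Subst) (G G' : Multiset Atom) : Prop :=
  ∃ (A : Atom) (rest : Multiset Atom) (body : List Atom) (head : Atom),
    G = A ::ₘ rest ∧ FreshRuleFor Φ κ G body head ∧ IsMGU γ head A ∧
    G' = G.map (Atom.subst γ)

/-- Stateful LP-Unif reduction on pairs (goal multiset, accumulated substitution). -/
def unifR (Φ : Prog) (p q : Multiset Atom × Subst) : Prop :=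
  ∃ κ γ, UnifStepL Φ κ γ p.1 q.1 ∧ q.2 = Subst.comp γ p.2

/-- Stateful LP-Struct reduction `→^μ·↪^1`: term-matching reduce to `→`-normal form,
then perform at most one substitutional step. -/
def structR (Φ : Prog) (p q : Multiset Atom × Subst) : Prop :=
  ∃ G', Relation.ReflTransGen (TMred Φ) p.1 G' ∧ TMNF Φ G' ∧
    ((q.1 = G' ∧ q.2 = p.2) ∨ ∃ κ γ, SubStepL Φ κ γ G' q.1 ∧ q.2 = Subst.comp γ p.2)

/-- A multiset of queries succeeds by LP-Unif reduction. -/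
def UnifSucc (Φ : Prog) (G : Multiset Atom) : Prop :=
  ∃ γ, Relation.ReflTransGen (unifR Φ) (G, Subst.id) (0, γ)

/-- A multiset of queries succeeds by LP-Struct reduction. -/
def StructSucc (Φ : Prog) (G : Multiset Atom) : Prop :=
  ∃ γ, Relation.ReflTransGen (structR Φ) (G, Subst.id) (0, γ)

/-- `Φ` is non-overlapping: heads of distinct axioms have no common instance. -/
def NonOverlapping (Φ : Prog) : Prop :=
  ∀ κ body head κ' body' head', (κ, body, head) ∈ Φ → (κ', body', head') ∈ Φ → κ ≠ κ' →
    ∀ σ δ : Subst, head.subst σ ≠ head'.subst δ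

/-! ### Realizability transformation -/

def ruleFV (body : List Atom) (head : Atom) : Finset ℕ := listFV body ∪ head.fv

/-- `extBody [A1,...,Am] [y1,...,ym] = [A1[y1],...,Am[ym]]`. -/
def extBody (As : List Atom) (ys : List ℕ) : List Atom :=
  List.zipWith (fun A y => A.ext (Tm.var y)) As ys

/-- Realizability transformation of a single axiom `κ : ∀x̄. A1,...,Am ⇒ B`
into `κ : ∀x̄∀ȳ. A1[y1],...,Am[ym] ⇒ B[f_κ(y1,...,ym)]` with fresh distinct `ȳ`. -/
def transRule (fsym : ℕ → ℕ) (κ : ℕ) (body : List Atom) (head : Atom) : List Atom × Atom :=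
  let N := (ruleFV body head).sup id + 1
  let ys := (List.range body.length).map (fun i => N + i)
  (extBody body ys, head.ext (.fn (fsym κ) (ys.map Tm.var)))

/-- The realizability transformation `F(Φ)`. -/
def transProg (fsym : ℕ → ℕ) (Φ : Prog) : Prog :=
  Φ.map (fun r => (r.1, transRule fsym r.1 r.2.1 r.2.2))

/-- `fsym` assigns a fresh function symbol `f_κ` to each proof-term constant `κ`. -/
def FreshSyms (fsym : ℕ → ℕ) (Φ : Prog) : Prop :=
  Function.Injective fsym ∧ ∀ κ, fsym κ ∉ progFns Φ

/-- The representation `⟦·⟧_φ` of first-order normal proof terms as first-order terms: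
`⟦a⟧_φ = φ(a)` and `⟦κ p1 ... pn⟧_φ = f_κ(⟦p1⟧_φ,...,⟦pn⟧_φ)`. -/
inductive PfRep (fsym : ℕ → ℕ) (φ : ℕ → Tm) : Pf → Tm → Prop where
  | bvar (a : ℕ) : PfRep fsym φ (.bvar a) (φ a)
  | app (κ : ℕ) (ps : List Pf) (ts : List Tm) (hlen : ps.length = ts.length)
      (h : ∀ pt ∈ ps.zip ts, PfRep fsym φ pt.1 pt.2) :
      PfRep fsym φ (Pf.apps (.const κ) ps) (.fn (fsym κ) ts)

/-- The map `[ȳ/ā]` sending the bound proof variables `a1,...,ak` (de Bruijn) of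
`λa1...ak.n` to the first-order variables `y1,...,yk`. -/
def mkPhi (ys : List ℕ) : ℕ → Tm := fun j => Tm.var (ys.getD (ys.length - 1 - j) 0)

/-!
In `F(Φ)` every axiom head ends in a term `f_κ(ȳ)` and every body atom in a fresh variable. Hence
the goals reachable from `A[y]` have the shape `B₁[u₁], …, Bₙ[uₙ]` with distinct variables `uᵢ`
occurring nowhere else, and such goals are term-matching normal forms: no head `…[f_κ(ȳ)]` matches
a variable. An LP-Unif step with mgu `γ` from such a goal is the substitutional step `G ↪ γG`
followed by the term-matching step that resolves `γA` with the axiom, so LP-Unif derivations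
through goals of this shape are LP-Struct derivations.

Both reductions are sound: a goal that reduces to `∅` has a provable instance. Conversely, a
provable instance of a goal of this shape is lifted to an LP-Unif step: for the first atom `A[u]`
and the axiom used last in a smallest derivation of its instance, take an mgu `μ` of `A` and the
head without its last argument that touches only their variables, and extend it by
`u ↦ f_κ(ȳ)`. It fixes all the last variables, so the resolvent has the same shape again, and
the total size of the derivations of its instance decreases.
-/

/-! ### Terms, atoms and substitutions -/

theorem Tm.induction {motive : Tm → Prop} (var : ∀ x, motive (.var x))
    (fn : ∀ f ts, (∀ t ∈ ts, motive t) → motive (.fn f ts)) (t : Tm) : motive t :=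
  Tm.rec (motive_1 := motive) (motive_2 := fun ts => ∀ t ∈ ts, motive t) var fn (by simp)
    (fun _ _ hhd htl t ht => by
      rcases List.mem_cons.mp ht with rfl | ht
      exacts [hhd, htl t ht]) t

@[simp] theorem Tm.subst_var (σ : Subst) (x : ℕ) : (Tm.var x).subst σ = σ x := by
  rw [Tm.subst]

@[simp] theorem Tm.subst_fn (σ : Subst) (f : ℕ) (ts : List Tm) :
    (Tm.fn f ts).subst σ = .fn f (ts.map (Tm.subst σ)) := by
  rw [Tm.subst, List.attach_map_val]

theorem mem_foldr_union {α β : Type*} [DecidableEq β] (f : α → Finset β) (l : List α) (x : β) :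
    x ∈ (l.map f).foldr (· ∪ ·) ∅ ↔ ∃ a ∈ l, x ∈ f a := by
  induction l with
  | nil => simp
  | cons a l ih => simp [ih]

@[simp] theorem Tm.fv_var (x : ℕ) : (Tm.var x).fv = {x} := by rw [Tm.fv]

theorem Tm.mem_fv_fn {x f : ℕ} {ts : List Tm} : x ∈ (Tm.fn f ts).fv ↔ ∃ t ∈ ts, x ∈ t.fv := by
  rw [Tm.fv, List.attach_map_val, mem_foldr_union]

@[simp] theorem Subst.comp_apply (θ γ : Subst) (x : ℕ) : Subst.comp θ γ x = (γ x).subst θ := rfl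

theorem Tm.subst_subst (γ θ : Subst) (t : Tm) :
    (t.subst γ).subst θ = t.subst (Subst.comp θ γ) := by
  induction t using Tm.induction with
  | var x => simp
  | fn f ts ih => simpa using List.map_congr_left ih

theorem Subst.comp_assoc (θ μ γ : Subst) :
    Subst.comp θ (Subst.comp μ γ) = Subst.comp (Subst.comp θ μ) γ :=
  funext fun x => Tm.subst_subst μ θ (γ x)

theorem Tm.subst_congr {γ δ : Subst} {t : Tm} (h : ∀ x ∈ t.fv, γ x = δ x) :
    t.subst γ = t.subst δ := by
  induction t using Tm.induction with
  | var x => simpa using h x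
  | fn f ts ih =>
    simpa using List.map_congr_left fun t ht =>
      ih t ht fun x hx => h x (Tm.mem_fv_fn.mpr ⟨t, ht, hx⟩)

@[simp] theorem Tm.subst_id (t : Tm) : t.subst Subst.id = t := by
  induction t using Tm.induction with
  | var x => simp [Subst.id]
  | fn f ts ih => simpa using List.map_congr_left ih

theorem Tm.mem_fv_subst {γ : Subst} {t : Tm} {x : ℕ} :
    x ∈ (t.subst γ).fv ↔ ∃ y ∈ t.fv, x ∈ (γ y).fv := by
  induction t using Tm.induction with
  | var z => simp
  | fn f ts ih =>
    simp only [Tm.subst_fn, Tm.mem_fv_fn, List.mem_map]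
    constructor
    · rintro ⟨_, ⟨t, ht, rfl⟩, hx⟩
      obtain ⟨y, hy, hxy⟩ := (ih t ht).mp hx
      exact ⟨y, ⟨t, ht, hy⟩, hxy⟩
    · rintro ⟨y, ⟨t, ht, hy⟩, hxy⟩
      exact ⟨_, ⟨t, ht, rfl⟩, (ih t ht).mpr ⟨y, hy, hxy⟩⟩

@[simp] theorem Atom.subst_pred (σ : Subst) (A : Atom) : (A.subst σ).pred = A.pred := rfl

@[simp] theorem Atom.subst_args (σ : Subst) (A : Atom) :
    (A.subst σ).args = A.args.map (Tm.subst σ) := rfl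

theorem Atom.subst_subst (γ θ : Subst) (A : Atom) :
    (A.subst γ).subst θ = A.subst (Subst.comp θ γ) := by
  simp only [Atom.subst, List.map_map, Atom.mk.injEq, true_and]
  exact List.map_congr_left fun t _ => Tm.subst_subst γ θ t

theorem Atom.mem_fv {x : ℕ} {A : Atom} : x ∈ A.fv ↔ ∃ t ∈ A.args, x ∈ t.fv :=
  mem_foldr_union _ _ _

theorem Atom.subst_congr {γ δ : Subst} {A : Atom} (h : ∀ x ∈ A.fv, γ x = δ x) :
    A.subst γ = A.subst δ := by
  simp only [Atom.subst, Atom.mk.injEq, true_and]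
  exact List.map_congr_left fun t ht =>
    Tm.subst_congr fun x hx => h x (Atom.mem_fv.mpr ⟨t, ht, hx⟩)

theorem Atom.mem_fv_subst {γ : Subst} {A : Atom} {x : ℕ} :
    x ∈ (A.subst γ).fv ↔ ∃ y ∈ A.fv, x ∈ (γ y).fv := by
  simp only [Atom.mem_fv, Atom.subst_args, List.mem_map]
  constructor
  · rintro ⟨_, ⟨t, ht, rfl⟩, hx⟩
    obtain ⟨y, hy, hxy⟩ := Tm.mem_fv_subst.mp hx
    exact ⟨y, ⟨t, ht, hy⟩, hxy⟩
  · rintro ⟨y, ⟨t, ht, hy⟩, hxy⟩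
    exact ⟨_, ⟨t, ht, rfl⟩, Tm.mem_fv_subst.mpr ⟨y, hy, hxy⟩⟩

theorem Atom.rename_subst (ρ : ℕ → ℕ) (γ : Subst) (A : Atom) :
    (A.rename ρ).subst γ = A.subst fun x => γ (ρ x) := by
  rw [Atom.rename, Atom.subst_subst]
  exact Atom.subst_congr fun x _ => by simp

theorem Atom.mem_fv_rename {ρ : ℕ → ℕ} {A : Atom} {x : ℕ} :
    x ∈ (A.rename ρ).fv ↔ ∃ y ∈ A.fv, ρ y = x := by
  simp [Atom.rename, Atom.mem_fv_subst, eq_comm]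

@[simp] theorem Atom.ext_subst (A : Atom) (t : Tm) (γ : Subst) :
    (A.ext t).subst γ = (A.subst γ).ext (t.subst γ) := by
  simp [Atom.ext, Atom.subst]

theorem Atom.ext_rename (A : Atom) (t : Tm) (ρ : ℕ → ℕ) :
    (A.ext t).rename ρ = (A.rename ρ).ext (t.subst fun x => .var (ρ x)) :=
  Atom.ext_subst A t _

theorem Atom.mem_fv_ext {A : Atom} {t : Tm} {x : ℕ} : x ∈ (A.ext t).fv ↔ x ∈ A.fv ∨ x ∈ t.fv := by
  simp [Atom.mem_fv, Atom.ext, or_comm]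

theorem Atom.ext_inj {A B : Atom} {s t : Tm} : A.ext s = B.ext t ↔ A = B ∧ s = t := by
  cases A; cases B
  simp only [Atom.ext, Atom.mk.injEq]
  constructor
  · rintro ⟨rfl, h⟩
    obtain ⟨h₁, h₂⟩ := List.append_inj' h rfl
    exact ⟨⟨rfl, h₁⟩, List.singleton_inj.mp h₂⟩
  · rintro ⟨⟨rfl, rfl⟩, rfl⟩
    exact ⟨rfl, rfl⟩

theorem mem_mFV {x : ℕ} {G : Multiset Atom} : x ∈ mFV G ↔ ∃ B ∈ G, x ∈ B.fv := by
  induction G using Multiset.induction with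
  | empty => simp [mFV]
  | cons A G ih => simp_all [mFV]

theorem mem_listFV {x : ℕ} {l : List Atom} : x ∈ listFV l ↔ ∃ B ∈ l, x ∈ B.fv :=
  mem_foldr_union _ _ _

/-! ### Most general unifiers -/

def Tm.size : Tm → ℕ
  | .var _ => 1
  | .fn _ ts => (ts.attach.map (fun t => Tm.size t.1)).sum + 1
decreasing_by
  have := List.sizeOf_lt_of_mem t.2
  simp only [Tm.fn.sizeOf_spec]
  omega

theorem Tm.size_fn (f : ℕ) (ts : List Tm) : (Tm.fn f ts).size = (ts.map Tm.size).sum + 1 := by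
  rw [Tm.size, List.attach_map_val]

theorem Tm.size_pos (t : Tm) : 0 < t.size := by
  cases t <;> simp [Tm.size_fn, Tm.size]

theorem Tm.size_le_size_subst {δ : Subst} {x : ℕ} {s : Tm} (hx : x ∈ s.fv) :
    (δ x).size ≤ (s.subst δ).size := by
  induction s using Tm.induction with
  | var y => simp_all
  | fn f ts ih =>
    obtain ⟨t, ht, hxt⟩ := Tm.mem_fv_fn.mp hx
    have := List.le_sum_of_mem (List.mem_map_of_mem (f := Tm.size)
      (List.mem_map_of_mem (f := Tm.subst δ) ht))
    rw [Tm.subst_fn, Tm.size_fn]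
    linarith [ih t ht hxt]

/-- The occurs check. -/
theorem Tm.subst_ne_of_mem_fv {δ : Subst} {x : ℕ} {s : Tm} (hx : x ∈ s.fv) (hs : s ≠ .var x) :
    δ x ≠ s.subst δ := by
  cases s with
  | var y => simp_all
  | fn f ts =>
    obtain ⟨t, ht, hxt⟩ := Tm.mem_fv_fn.mp hx
    have := List.le_sum_of_mem (List.mem_map_of_mem (f := Tm.size)
      (List.mem_map_of_mem (f := Tm.subst δ) ht))
    intro h
    have h' := congrArg Tm.size h
    rw [Tm.subst_fn, Tm.size_fn] at h'
    linarith [Tm.size_le_size_subst (δ := δ) hxt]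

def Subst.ConfinedTo (μ : Subst) (V : Finset ℕ) : Prop :=
  (∀ z ∉ V, μ z = .var z) ∧ ∀ z, (μ z).fv ⊆ V ∪ {z}

theorem Subst.confinedTo_id (V : Finset ℕ) : Subst.id.ConfinedTo V :=
  ⟨fun _ _ => rfl, fun z => by simp [Subst.id]⟩

theorem Subst.ConfinedTo.mono {μ : Subst} {V W : Finset ℕ} (h : μ.ConfinedTo V) (hVW : V ⊆ W) :
    μ.ConfinedTo W :=
  ⟨fun z hz => h.1 z fun hzV => hz (hVW hzV),
    fun z => (h.2 z).trans (Finset.union_subset_union_left hVW)⟩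

theorem Subst.ConfinedTo.comp {μ ν : Subst} {V : Finset ℕ} (hμ : μ.ConfinedTo V)
    (hν : ν.ConfinedTo V) : (Subst.comp μ ν).ConfinedTo V := by
  refine ⟨fun z hz => by simp [hν.1 z hz, hμ.1 z hz], fun z x hx => ?_⟩
  obtain ⟨y, hy, hxy⟩ := Tm.mem_fv_subst.mp hx
  have hxV := hμ.2 y hxy
  have hyV := hν.2 z hy
  simp only [Finset.mem_union, Finset.mem_singleton] at hxV hyV ⊢
  rcases hxV with hxV | rfl
  · exact Or.inl hxV
  · exact hyV

theorem Subst.ConfinedTo.mem_fv_subst_iff {μ : Subst} {V : Finset ℕ} (h : μ.ConfinedTo V)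
    {w : ℕ} (hw : w ∉ V) {t : Tm} : w ∈ (t.subst μ).fv ↔ w ∈ t.fv := by
  rw [Tm.mem_fv_subst]
  constructor
  · rintro ⟨y, hy, hwy⟩
    have := h.2 y hwy
    simp only [Finset.mem_union, hw, false_or, Finset.mem_singleton] at this
    exact this ▸ hy
  · exact fun hwt => ⟨w, hwt, by simp [h.1 w hw]⟩

theorem Subst.ConfinedTo.mem_fv_atom_subst_iff {μ : Subst} {V : Finset ℕ} (h : μ.ConfinedTo V)
    {w : ℕ} (hw : w ∉ V) {A : Atom} : w ∈ (A.subst μ).fv ↔ w ∈ A.fv := by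
  simp only [Atom.mem_fv, Atom.subst_args, List.mem_map]
  constructor
  · rintro ⟨_, ⟨t, ht, rfl⟩, hwt⟩
    exact ⟨t, ht, (h.mem_fv_subst_iff hw).mp hwt⟩
  · rintro ⟨t, ht, hwt⟩
    exact ⟨_, ⟨t, ht, rfl⟩, (h.mem_fv_subst_iff hw).mpr hwt⟩

theorem Tm.subst_update_subst {δ : Subst} {x : ℕ} {s : Tm} (h : δ x = s.subst δ) (t : Tm) :
    (t.subst (Function.update Tm.var x s)).subst δ = t.subst δ := by
  rw [Tm.subst_subst]
  refine Tm.subst_congr fun z _ => ?_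
  rcases eq_or_ne z x with rfl | hz
  · simp [h]
  · simp [hz]

abbrev Eqns := List (Tm × Tm)

namespace Eqns

def Unifies (γ : Subst) (l : Eqns) : Prop := ∀ p ∈ l, p.1.subst γ = p.2.subst γ

def fv (l : Eqns) : Finset ℕ := (l.map fun p => p.1.fv ∪ p.2.fv).foldr (· ∪ ·) ∅

def size (l : Eqns) : ℕ := (l.map fun p => p.1.size + p.2.size).sum

def IsMGU (μ : Subst) (l : Eqns) : Prop :=
  Unifies μ l ∧ ∀ δ, Unifies δ l → ∃ θ, δ = Subst.comp θ μ

def IsRelevantMGU (μ : Subst) (l : Eqns) : Prop := IsMGU μ l ∧ μ.ConfinedTo (fv l)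

theorem unifies_cons {γ : Subst} {p : Tm × Tm} {l : Eqns} :
    Unifies γ (p :: l) ↔ p.1.subst γ = p.2.subst γ ∧ Unifies γ l :=
  List.forall_mem_cons

theorem unifies_append {γ : Subst} {l l' : Eqns} :
    Unifies γ (l ++ l') ↔ Unifies γ l ∧ Unifies γ l' :=
  List.forall_mem_append

theorem mem_fv {x : ℕ} {l : Eqns} : x ∈ fv l ↔ ∃ p ∈ l, x ∈ p.1.fv ∨ x ∈ p.2.fv := by
  simp [fv, mem_foldr_union]

theorem fv_cons (p : Tm × Tm) (l : Eqns) : fv (p :: l) = p.1.fv ∪ p.2.fv ∪ fv l := rfl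

theorem fv_append (l l' : Eqns) : fv (l ++ l') = fv l ∪ fv l' := by
  ext x; simp only [mem_fv, List.mem_append, Finset.mem_union]; grind

theorem size_cons (p : Tm × Tm) (l : Eqns) : size (p :: l) = p.1.size + p.2.size + size l := by
  simp [size]

theorem unifies_zip_iff {γ : Subst} {ts ss : List Tm} (hlen : ts.length = ss.length) :
    Unifies γ (ts.zip ss) ↔ ts.map (Tm.subst γ) = ss.map (Tm.subst γ) := by
  rw [← List.forall₂_eq_eq_eq, List.forall₂_map_left_iff, List.forall₂_map_right_iff,
    List.forall₂_iff_zip]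
  exact ⟨fun h => ⟨hlen, fun hp => h _ hp⟩, fun h p hp => h.2 hp⟩

theorem fv_zip_subset (ts ss : List Tm) (f g : ℕ) :
    fv (ts.zip ss) ⊆ (Tm.fn f ts).fv ∪ (Tm.fn g ss).fv := by
  intro x hx
  obtain ⟨p, hp, hxp⟩ := mem_fv.mp hx
  have := List.of_mem_zip hp
  simp only [Finset.mem_union, Tm.mem_fv_fn]
  exact hxp.imp (fun h => ⟨_, this.1, h⟩) (fun h => ⟨_, this.2, h⟩)

theorem size_zip_le : ∀ ts ss : List Tm,
    size (ts.zip ss) ≤ (ts.map Tm.size).sum + (ss.map Tm.size).sum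
  | [], _ => by simp [size]
  | _ :: _, [] => by simp [size]
  | t :: ts, s :: ss => by
    have := size_zip_le ts ss
    simp only [List.zip_cons_cons, size_cons, List.map_cons, List.sum_cons]
    omega

theorem IsMGU.of_unifies_iff {μ : Subst} {l l' : Eqns} (h : IsMGU μ l')
    (hiff : ∀ δ, Unifies δ l ↔ Unifies δ l') : IsMGU μ l :=
  ⟨(hiff μ).mpr h.1, fun δ hδ => h.2 δ ((hiff δ).mp hδ)⟩

theorem IsRelevantMGU.of_unifies_iff {μ : Subst} {l l' : Eqns} (h : IsRelevantMGU μ l')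
    (hiff : ∀ δ, Unifies δ l ↔ Unifies δ l') (hfv : fv l' ⊆ fv l) : IsRelevantMGU μ l :=
  ⟨h.1.of_unifies_iff hiff, h.2.mono hfv⟩

theorem isRelevantMGU_nil : IsRelevantMGU Subst.id [] :=
  ⟨⟨fun _ h => absurd h List.not_mem_nil, fun δ _ => ⟨δ, funext fun z => by simp [Subst.id]⟩⟩,
    Subst.confinedTo_id _⟩

def eliminate (x : ℕ) (s : Tm) (l : Eqns) : Eqns :=
  l.map fun p => (p.1.subst (Function.update Tm.var x s), p.2.subst (Function.update Tm.var x s))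

theorem unifies_eliminate {δ : Subst} {x : ℕ} {s : Tm} {l : Eqns}
    (h : Unifies δ ((.var x, s) :: l)) : Unifies δ (eliminate x s l) := by
  obtain ⟨hx, hl⟩ := unifies_cons.mp h
  rw [Tm.subst_var] at hx
  intro p hp
  obtain ⟨q, hq, rfl⟩ := List.mem_map.mp hp
  simpa only [Tm.subst_update_subst hx] using hl q hq

theorem fv_eliminate_subset {x : ℕ} {s : Tm} (hxs : x ∉ s.fv) (l : Eqns) :
    fv (eliminate x s l) ⊆ (fv ((.var x, s) :: l)).erase x := by
  have key : ∀ t : Tm, ∀ y ∈ (t.subst (Function.update Tm.var x s)).fv,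
      y ≠ x ∧ (y ∈ s.fv ∨ y ∈ t.fv) := by
    intro t y hy
    obtain ⟨z, hz, hyz⟩ := Tm.mem_fv_subst.mp hy
    rcases eq_or_ne z x with rfl | hzx
    · simp only [Function.update_self] at hyz
      exact ⟨fun h => hxs (h ▸ hyz), Or.inl hyz⟩
    · simp only [Function.update_of_ne hzx, Tm.fv_var, Finset.mem_singleton] at hyz
      exact ⟨hyz ▸ hzx, Or.inr (hyz ▸ hz)⟩
  intro y hy
  obtain ⟨_, hp, hyp⟩ := mem_fv.mp hy
  obtain ⟨q, hq, rfl⟩ := List.mem_map.mp hp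
  rw [Finset.mem_erase, fv_cons]
  simp only [Finset.mem_union]
  rcases hyp with hyp | hyp
  · obtain ⟨hne, hor⟩ := key q.1 y hyp
    exact ⟨hne, hor.elim (fun h => Or.inl (Or.inr h)) fun h => Or.inr (mem_fv.mpr ⟨q, hq, .inl h⟩)⟩
  · obtain ⟨hne, hor⟩ := key q.2 y hyp
    exact ⟨hne, hor.elim (fun h => Or.inl (Or.inr h)) fun h => Or.inr (mem_fv.mpr ⟨q, hq, .inr h⟩)⟩

theorem IsRelevantMGU.of_eliminate {μ : Subst} {x : ℕ} {s : Tm} {l : Eqns} (hxs : x ∉ s.fv)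
    (hμ : IsRelevantMGU μ (eliminate x s l)) :
    IsRelevantMGU (Subst.comp μ (Function.update Tm.var x s)) ((.var x, s) :: l) := by
  set τ : Subst := Function.update Tm.var x s
  have hsτ : s.subst τ = s := by
    conv_rhs => rw [← Tm.subst_id s]
    exact Tm.subst_congr fun z hz => by
      simp [τ, Function.update_of_ne (ne_of_mem_of_not_mem hz hxs), Subst.id]
  have hτ : τ.ConfinedTo (fv ((.var x, s) :: l)) := by
    refine ⟨fun z hz => Function.update_of_ne (fun h => hz (by simp [h, fv_cons])) _ _,
      fun z => ?_⟩
    rcases eq_or_ne z x with rfl | hz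
    · simp only [τ, Function.update_self, fv_cons]
      exact fun y hy => by simp [hy]
    · simp [τ, Function.update_of_ne hz]
  refine ⟨⟨unifies_cons.mpr ⟨?_, fun p hp => ?_⟩, fun δ hδ => ?_⟩, ?_⟩
  · simp only [Tm.subst_var, Subst.comp_apply, τ, Function.update_self]
    rw [← Tm.subst_subst, hsτ]
  · simpa only [Tm.subst_subst] using hμ.1.1 _ (List.mem_map_of_mem hp)
  · obtain ⟨θ, rfl⟩ := hμ.1.2 δ (unifies_eliminate hδ)
    have hx : Subst.comp θ μ x = s.subst (Subst.comp θ μ) := by simpa using (unifies_cons.mp hδ).1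
    refine ⟨θ, funext fun z => ?_⟩
    have := Tm.subst_update_subst hx (.var z)
    rw [Tm.subst_var, Tm.subst_var] at this
    rw [Subst.comp_assoc]
    exact this.symm
  · exact (hμ.2.mono ((fv_eliminate_subset hxs l).trans (Finset.erase_subset _ _))).comp hτ

theorem IsRelevantMGU.swap {μ : Subst} {t s : Tm} {l : Eqns}
    (h : IsRelevantMGU μ ((t, s) :: l)) : IsRelevantMGU μ ((s, t) :: l) :=
  h.of_unifies_iff (fun δ => by simp only [unifies_cons, eq_comm])
    (by simp only [fv_cons, Finset.union_comm t.fv]; rfl)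

theorem IsRelevantMGU.cons_self {μ : Subst} {t : Tm} {l : Eqns} (h : IsRelevantMGU μ l) :
    IsRelevantMGU μ ((t, t) :: l) :=
  h.of_unifies_iff (fun δ => by simp [unifies_cons])
    (by rw [fv_cons]; exact Finset.subset_union_right)

theorem IsRelevantMGU.decompose {μ : Subst} {f : ℕ} {ts ss : List Tm} {l : Eqns}
    (hlen : ts.length = ss.length) (h : IsRelevantMGU μ (ts.zip ss ++ l)) :
    IsRelevantMGU μ ((.fn f ts, .fn f ss) :: l) :=
  h.of_unifies_iff (fun δ => by simp [unifies_cons, unifies_append, unifies_zip_iff hlen])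
    (by rw [fv_append, fv_cons]; exact Finset.union_subset_union (fv_zip_subset ts ss f f) le_rfl)

theorem card_fv_eliminate_lt {x : ℕ} {s : Tm} (hxs : x ∉ s.fv) (l : Eqns) :
    (fv (eliminate x s l)).card < (fv ((.var x, s) :: l)).card :=
  (Finset.card_le_card (fv_eliminate_subset hxs l)).trans_lt
    (Finset.card_erase_lt_of_mem (by simp [fv_cons]))

theorem size_decompose_lt (f g : ℕ) (ts ss : List Tm) (l : Eqns) :
    size (ts.zip ss ++ l) < size ((.fn f ts, .fn g ss) :: l) := by
  have := size_zip_le ts ss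
  simp only [size, List.map_append, List.sum_append] at this ⊢
  simp only [List.map_cons, List.sum_cons, Tm.size_fn]
  omega

/-- Robinson's unification theorem, by the Martelli–Montanari transformations. -/
theorem exists_isRelevantMGU : ∀ l : Eqns, (∃ δ, Unifies δ l) → ∃ μ, IsRelevantMGU μ l
  | [], _ => ⟨Subst.id, isRelevantMGU_nil⟩
  | (t, s) :: l, ⟨δ, hδ⟩ => by
    obtain ⟨hts, hl⟩ := unifies_cons.mp hδ
    by_cases heq : t = s
    · subst heq
      obtain ⟨μ, hμ⟩ := exists_isRelevantMGU l ⟨δ, hl⟩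
      exact ⟨μ, hμ.cons_self⟩
    match t, s with
    | .var x, s =>
      have hxs : x ∉ s.fv := fun hx => Tm.subst_ne_of_mem_fv hx (Ne.symm heq) (by simpa using hts)
      obtain ⟨μ, hμ⟩ := exists_isRelevantMGU (eliminate x s l) ⟨δ, unifies_eliminate hδ⟩
      exact ⟨_, hμ.of_eliminate hxs⟩
    | .fn f ts, .var x =>
      have hxs : x ∉ (Tm.fn f ts).fv := fun hx =>
        Tm.subst_ne_of_mem_fv hx heq (by simpa using hts.symm)
      obtain ⟨μ, hμ⟩ := exists_isRelevantMGU (eliminate x (.fn f ts) l)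
        ⟨δ, unifies_eliminate (unifies_cons.mpr ⟨by simpa using hts.symm, hl⟩)⟩
      exact ⟨_, (hμ.of_eliminate hxs).swap⟩
    | .fn f ts, .fn g ss =>
      simp only [Tm.subst_fn, Tm.fn.injEq] at hts
      obtain ⟨rfl, hmap⟩ := hts
      have hlen : ts.length = ss.length := by simpa using congrArg List.length hmap
      obtain ⟨μ, hμ⟩ := exists_isRelevantMGU (ts.zip ss ++ l)
        ⟨δ, unifies_append.mpr ⟨(unifies_zip_iff hlen).mpr hmap, hl⟩⟩
      exact ⟨μ, hμ.decompose hlen⟩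
termination_by l => ((fv l).card, size l)
decreasing_by
  · exact Prod.Lex.right' _ (Finset.card_le_card (by rw [fv_cons]; exact Finset.subset_union_right))
      (by rw [size_cons]; have := Tm.size_pos (t, s).1; omega)
  · exact Prod.Lex.left _ _ (card_fv_eliminate_lt hxs l)
  · refine Prod.Lex.left _ _ ?_
    have hswap : fv ((Tm.fn f ts, Tm.var x) :: l) = fv ((Tm.var x, Tm.fn f ts) :: l) := by
      simp only [fv_cons, Finset.union_comm (Tm.fn f ts).fv]
    exact hswap ▸ card_fv_eliminate_lt hxs l
  · exact Prod.Lex.right' _ (Finset.card_le_card (by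
      rw [fv_append, fv_cons]; exact Finset.union_subset_union (fv_zip_subset ts ss f g) le_rfl))
      (size_decompose_lt f g ts ss l)

end Eqns

theorem unifies_ext_iff {γ : Subst} {A B : Atom} {s t : Tm} :
    Unifies γ (A.ext s) (B.ext t) ↔ Unifies γ A B ∧ s.subst γ = t.subst γ := by
  simp only [Unifies, Atom.ext_subst, Atom.ext_inj]

theorem unifies_iff_eqns {γ : Subst} {A B : Atom} :
    Unifies γ A B ↔
      A.pred = B.pred ∧ A.args.length = B.args.length ∧ Eqns.Unifies γ (A.args.zip B.args) := by
  simp only [Unifies, Atom.subst, Atom.mk.injEq]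
  constructor
  · rintro ⟨hp, hargs⟩
    have hlen : A.args.length = B.args.length := by simpa using congrArg List.length hargs
    exact ⟨hp, hlen, (Eqns.unifies_zip_iff hlen).mpr hargs⟩
  · rintro ⟨hp, hlen, h⟩
    exact ⟨hp, (Eqns.unifies_zip_iff hlen).mp h⟩

theorem exists_isMGU_confinedTo {A B : Atom} (h : ∃ δ, Unifies δ A B) :
    ∃ μ, IsMGU μ A B ∧ μ.ConfinedTo (A.fv ∪ B.fv) := by
  obtain ⟨δ, hδ⟩ := h
  obtain ⟨hp, hlen, hδ⟩ := unifies_iff_eqns.mp hδ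
  obtain ⟨μ, ⟨hμ, hgen⟩, hconf⟩ := Eqns.exists_isRelevantMGU _ ⟨δ, hδ⟩
  refine ⟨μ, ⟨unifies_iff_eqns.mpr ⟨hp, hlen, hμ⟩,
    fun δ' hδ' => hgen δ' (unifies_iff_eqns.mp hδ').2.2⟩, hconf.mono fun x hx => ?_⟩
  obtain ⟨p, hp, hxp⟩ := Eqns.mem_fv.mp hx
  obtain ⟨h₁, h₂⟩ := List.of_mem_zip hp
  rw [Finset.mem_union, Atom.mem_fv, Atom.mem_fv]
  exact hxp.imp (fun h => ⟨_, h₁, h⟩) fun h => ⟨_, h₂, h⟩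

theorem isMGU_update_ext {μ : Subst} {H A : Atom} {u : ℕ} {t : Tm} (hμ : IsMGU μ H A)
    (hconf : μ.ConfinedTo (H.fv ∪ A.fv)) (hu : u ∉ H.fv ∪ A.fv)
    (ht : ∀ z ∈ t.fv, z ∉ H.fv ∪ A.fv) (hut : u ∉ t.fv) :
    IsMGU (Function.update μ u t) (H.ext t) (A.ext (.var u)) := by
  have hne : ∀ {z}, z ∈ H.fv ∪ A.fv → z ≠ u := fun hz h => hu (h ▸ hz)
  have htμ : t.subst μ = t := by
    conv_rhs => rw [← Tm.subst_id t]
    exact Tm.subst_congr fun z hz => hconf.1 z (ht z hz)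
  have htμ₀ : t.subst (Function.update μ u t) = t := by
    rw [Tm.subst_congr fun z hz => Function.update_of_ne (by rintro rfl; exact hut hz) _ _, htμ]
  have hμ₀ : ∀ B : Atom, B.fv ⊆ H.fv ∪ A.fv → B.subst (Function.update μ u t) = B.subst μ :=
    fun B hB => Atom.subst_congr fun z hz => Function.update_of_ne (hne (hB hz)) _ _
  refine ⟨unifies_ext_iff.mpr ⟨?_, by simp [htμ₀]⟩, fun δ hδ => ?_⟩
  · rw [Unifies, hμ₀ H Finset.subset_union_left, hμ₀ A Finset.subset_union_right]
    exact hμ.1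
  obtain ⟨hHA, htu⟩ := unifies_ext_iff.mp hδ
  obtain ⟨θ, rfl⟩ := hμ.2 δ hHA
  refine ⟨θ, funext fun z => ?_⟩
  rcases eq_or_ne z u with rfl | hz
  · simpa [← Tm.subst_subst, htμ] using htu.symm
  · simp [Function.update_of_ne hz]

/-! ### Derivations and soundness -/

/-- Derivations of size `n`; premises that are equal atoms are given equal sizes `w B`. -/
inductive ProvesIn (Ψ : Prog) : ℕ → Atom → Prop where
  | rule {κ : ℕ} {body : List Atom} {head : Atom} (σ : Subst) (w : Atom → ℕ) :
      (κ, body, head) ∈ Ψ → (∀ B ∈ body, ProvesIn Ψ (w B) (B.subst σ)) →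
      ProvesIn Ψ ((body.map w).sum + 1) (head.subst σ)

def Provable (Ψ : Prog) (X : Atom) : Prop := ∃ n, ProvesIn Ψ n X

open Classical in
noncomputable def proofSize (Ψ : Prog) (X : Atom) : ℕ :=
  if h : Provable Ψ X then Nat.find h else 0

theorem ProvesIn.proofSize_le {Ψ : Prog} {n : ℕ} {X : Atom} (h : ProvesIn Ψ n X) :
    proofSize Ψ X ≤ n := by
  classical
  rw [proofSize, dif_pos ⟨n, h⟩]
  exact Nat.find_min' _ h

theorem Provable.provesIn_proofSize {Ψ : Prog} {X : Atom} (h : Provable Ψ X) :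
    ProvesIn Ψ (proofSize Ψ X) X := by
  classical
  rw [proofSize, dif_pos h]
  exact Nat.find_spec h

theorem provable_subst_head {Ψ : Prog} {κ : ℕ} {body : List Atom} {head : Atom} {σ : Subst}
    (hmem : (κ, body, head) ∈ Ψ) (h : ∀ B ∈ body, Provable Ψ (B.subst σ)) :
    Provable Ψ (head.subst σ) := by
  choose! w hw using h
  exact ⟨_, .rule σ w hmem hw⟩

theorem Provable.exists_rule {Ψ : Prog} {X : Atom} (h : Provable Ψ X) :
    ∃ κ body head σ, (κ, body, head) ∈ Ψ ∧ head.subst σ = X ∧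
      (∀ B ∈ body, Provable Ψ (B.subst σ)) ∧
      (body.map fun B => proofSize Ψ (B.subst σ)).sum < proofSize Ψ X := by
  obtain ⟨κ, body, head, σ, w, hmem, hw, hsize, hX⟩ : ∃ κ body head σ w,
      (κ, body, head) ∈ Ψ ∧ (∀ B ∈ body, ProvesIn Ψ (w B) (B.subst σ)) ∧
      (body.map w).sum + 1 = proofSize Ψ X ∧ head.subst σ = X := by
    have hmin := h.provesIn_proofSize
    generalize hn : proofSize Ψ X = n at hmin
    cases hmin with
    | rule σ w hmem hw => exact ⟨_, _, _, σ, w, hmem, hw, rfl, rfl⟩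
  refine ⟨κ, body, head, σ, hmem, hX, fun B hB => ⟨_, hw B hB⟩, ?_⟩
  have : (body.map fun B => proofSize Ψ (B.subst σ)).sum ≤ (body.map w).sum :=
    List.sum_le_sum fun B hB => (hw B hB).proofSize_le
  omega

def AllProvable (Ψ : Prog) (I : Multiset Atom) : Prop := ∀ X ∈ I, Provable Ψ X

def Solvable (Ψ : Prog) (G : Multiset Atom) : Prop := ∃ δ, AllProvable Ψ (G.map (Atom.subst δ))

noncomputable def totalProofSize (Ψ : Prog) (I : Multiset Atom) : ℕ := (I.map (proofSize Ψ)).sum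

theorem totalProofSize_add (Ψ : Prog) (I J : Multiset Atom) :
    totalProofSize Ψ (I + J) = totalProofSize Ψ I + totalProofSize Ψ J := by
  simp [totalProofSize]

theorem totalProofSize_cons (Ψ : Prog) (X : Atom) (I : Multiset Atom) :
    totalProofSize Ψ (X ::ₘ I) = proofSize Ψ X + totalProofSize Ψ I := by
  simp [totalProofSize]

theorem totalProofSize_coe (Ψ : Prog) (l : List Atom) :
    totalProofSize Ψ ↑l = (l.map (proofSize Ψ)).sum := by
  simp [totalProofSize]

theorem Solvable.of_map_subst {Ψ : Prog} {γ : Subst} {G : Multiset Atom}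
    (h : Solvable Ψ (G.map (Atom.subst γ))) : Solvable Ψ G := by
  obtain ⟨δ, hδ⟩ := h
  refine ⟨Subst.comp δ γ, fun X hX => ?_⟩
  obtain ⟨B, hB, rfl⟩ := Multiset.mem_map.mp hX
  simpa [Atom.subst_subst] using hδ _ (Multiset.mem_map_of_mem _ (Multiset.mem_map_of_mem _ hB))

theorem Solvable.of_tmred {Ψ : Prog} {G G' : Multiset Atom} (hstep : TMred Ψ G G')
    (h : Solvable Ψ G') : Solvable Ψ G := by
  obtain ⟨κ, body, head, σ, rest, hmem, rfl, rfl⟩ := hstep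
  obtain ⟨δ, hδ⟩ := h
  refine ⟨δ, fun X hX => ?_⟩
  rw [Multiset.map_add] at hδ
  rw [Multiset.map_cons, Multiset.mem_cons] at hX
  rcases hX with rfl | hX
  · rw [Atom.subst_subst]
    refine provable_subst_head hmem fun B hB => ?_
    rw [← Atom.subst_subst]
    exact hδ _ (Multiset.mem_add.mpr (Or.inl (Multiset.mem_map_of_mem _
      (Multiset.mem_coe.mpr (List.mem_map_of_mem hB)))))
  · exact hδ X (Multiset.mem_add.mpr (Or.inr hX))

theorem Solvable.of_tmred_path {Ψ : Prog} {G G' : Multiset Atom}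
    (hpath : Relation.ReflTransGen (TMred Ψ) G G') (h : Solvable Ψ G') : Solvable Ψ G := by
  induction hpath using Relation.ReflTransGen.head_induction_on with
  | refl => exact h
  | head hstep _ ih => exact ih.of_tmred hstep

theorem UnifStepL.subStepL {Ψ : Prog} {κ : ℕ} {γ : Subst} {G G' : Multiset Atom}
    (h : UnifStepL Ψ κ γ G G') : SubStepL Ψ κ γ G (G.map (Atom.subst γ)) :=
  let ⟨A, rest, body, head, hG, hfresh, hmgu, _⟩ := h
  ⟨A, rest, body, head, hG, hfresh, hmgu, rfl⟩

theorem UnifStepL.tmred {Ψ : Prog} {κ : ℕ} {γ : Subst} {G G' : Multiset Atom}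
    (h : UnifStepL Ψ κ γ G G') : TMred Ψ (G.map (Atom.subst γ)) G' := by
  obtain ⟨A, rest, _, _, rfl, ⟨body, head, ρ, hmem, -, rfl, rfl, -⟩, ⟨hunif, -⟩, rfl⟩ := h
  refine ⟨κ, body, head, fun x => γ (ρ x), rest.map (Atom.subst γ), hmem, ?_, ?_⟩
  · rw [Multiset.map_cons, ← hunif, Atom.rename_subst]
  · rw [List.map_map]
    congr 2
    exact List.map_congr_left fun B _ => Atom.rename_subst ρ γ B

theorem solvable_of_unifR_path {Ψ : Prog} {p q : Multiset Atom × Subst}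
    (h : Relation.ReflTransGen (unifR Ψ) p q) (hq : q.1 = 0) : Solvable Ψ p.1 := by
  induction h using Relation.ReflTransGen.head_induction_on with
  | refl => exact ⟨Subst.id, by simp [hq, AllProvable]⟩
  | head hstep _ ih =>
    obtain ⟨κ, γ, hU, -⟩ := hstep
    exact (ih.of_tmred hU.tmred).of_map_subst

theorem solvable_of_structR_path {Ψ : Prog} {p q : Multiset Atom × Subst}
    (h : Relation.ReflTransGen (structR Ψ) p q) (hq : q.1 = 0) : Solvable Ψ p.1 := by
  induction h using Relation.ReflTransGen.head_induction_on with
  | refl => exact ⟨Subst.id, by simp [hq, AllProvable]⟩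
  | head hstep _ ih =>
    obtain ⟨G', htm, -, hlast⟩ := hstep
    refine Solvable.of_tmred_path htm ?_
    rcases hlast with ⟨heq, -⟩ | ⟨κ, γ, ⟨_, _, _, _, -, -, -, heq⟩, -⟩
    · exact heq ▸ ih
    · exact (heq ▸ ih).of_map_subst

theorem unifies_shift {head A : Atom} {σ δ : Subst} {M : ℕ} (hmatch : head.subst σ = A.subst δ)
    (hM : ∀ v ∈ A.fv, v < M) :
    Unifies (fun x => if M ≤ x then σ (x - M) else δ x) (head.rename (· + M)) A := by
  rw [Unifies, Atom.rename_subst]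
  simp only [Nat.le_add_left, if_true, Nat.add_sub_cancel]
  rw [hmatch]
  exact Atom.subst_congr fun x hx => by simp [Nat.not_le.mpr (hM x hx)]

/-- The lifting lemma of SLD-resolution, for the copy of the axiom shifted above the goal. -/
theorem UnifStepL.of_match {Ψ : Prog} {κ : ℕ} {body : List Atom} {head A : Atom}
    {rest : Multiset Atom} {σ δ μ : Subst} {M : ℕ} (hmem : (κ, body, head) ∈ Ψ)
    (hM : ∀ v ∈ mFV (A ::ₘ rest), v < M) (hmatch : head.subst σ = A.subst δ)
    (hμ : IsMGU μ (head.rename (· + M)) A) :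
    UnifStepL Ψ κ μ (A ::ₘ rest)
        (↑((body.map (Atom.rename (· + M))).map (Atom.subst μ)) + rest.map (Atom.subst μ)) ∧
      ∃ θ, (↑((body.map (Atom.rename (· + M))).map (Atom.subst μ)) +
          rest.map (Atom.subst μ)).map (Atom.subst θ) =
        ↑(body.map (Atom.subst σ)) + rest.map (Atom.subst δ) := by
  have hshift : ∀ B : Atom, ∀ x ∈ (B.rename (· + M)).fv, M ≤ x := by
    intro B x hx
    obtain ⟨y, -, rfl⟩ := Atom.mem_fv_rename.mp hx
    exact Nat.le_add_left M y
  have hfresh : FreshRuleFor Ψ κ (A ::ₘ rest) (body.map (Atom.rename (· + M)))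
      (head.rename (· + M)) := by
    refine ⟨body, head, (· + M), hmem, add_left_injective M, rfl, rfl,
      Finset.disjoint_left.mpr fun x hx hxG => (Nat.not_le.mpr (hM x hxG)) ?_⟩
    rcases Finset.mem_union.mp hx with hx | hx
    · obtain ⟨_, hB, hxB⟩ := mem_listFV.mp hx
      obtain ⟨B, -, rfl⟩ := List.mem_map.mp hB
      exact hshift B x hxB
    · exact hshift head x hx
  refine ⟨⟨A, rest, _, _, rfl, hfresh, hμ, rfl⟩, ?_⟩
  have hA : ∀ v ∈ A.fv, v < M := fun v hv => hM v (mem_mFV.mpr ⟨A, Multiset.mem_cons_self _ _, hv⟩)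
  obtain ⟨θ, hθ⟩ := hμ.2 _ (unifies_shift hmatch hA)
  have hθx : ∀ x, (μ x).subst θ = if M ≤ x then σ (x - M) else δ x :=
    fun x => (congrFun hθ x).symm
  refine ⟨θ, ?_⟩
  simp only [Multiset.map_add, Multiset.map_coe, List.map_map, Multiset.map_map]
  congr 1
  · congr 1
    refine List.map_congr_left fun B _ => ?_
    simp only [Function.comp_apply, Atom.rename_subst, Atom.subst_subst]
    exact Atom.subst_congr fun x _ => by simp [hθx]
  · refine Multiset.map_congr rfl fun B hB => ?_
    simp only [Function.comp_apply, Atom.subst_subst]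
    exact Atom.subst_congr fun x hx => by
      simp [hθx, Nat.not_le.mpr (hM x (mem_mFV.mpr ⟨B, Multiset.mem_cons_of_mem hB, hx⟩))]

/-! ### Goals of transformed programs -/

theorem mem_transProg {fsym : ℕ → ℕ} {Φ : Prog} {κ : ℕ} {body : List Atom} {head : Atom}
    (hmem : (κ, body, head) ∈ transProg fsym Φ) :
    ∃ body₀ head₀ ys, (κ, body₀, head₀) ∈ Φ ∧ body = extBody body₀ ys ∧
      head = head₀.ext (.fn (fsym κ) (ys.map .var)) ∧ ys.Nodup ∧ ys.length = body₀.length ∧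
      ∀ y ∈ ys, y ∉ ruleFV body₀ head₀ := by
  obtain ⟨⟨κ, body₀, head₀⟩, hmem₀, heq⟩ := List.mem_map.mp hmem
  simp only [transRule, Prod.mk.injEq] at heq
  obtain ⟨rfl, rfl, rfl⟩ := heq
  refine ⟨body₀, head₀, _, hmem₀, rfl, rfl, List.nodup_range.map (add_right_injective _),
    by simp, fun y hy hyfv => ?_⟩
  obtain ⟨i, -, rfl⟩ := List.mem_map.mp hy
  have : id _ ≤ (ruleFV body₀ head₀).sup id := Finset.le_sup hyfv
  simp only [id] at this
  omega

def goalOf (Bs : List (Atom × ℕ)) : Multiset Atom := ↑(Bs.map fun p => p.1.ext (.var p.2))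

def LastVarsFresh (Bs : List (Atom × ℕ)) : Prop :=
  (Bs.map Prod.snd).Nodup ∧ ∀ p ∈ Bs, ∀ q ∈ Bs, p.2 ∉ q.1.fv

theorem goalOf_cons (p : Atom × ℕ) (Bs : List (Atom × ℕ)) :
    goalOf (p :: Bs) = p.1.ext (.var p.2) ::ₘ goalOf Bs := rfl

theorem goalOf_append (Bs Cs : List (Atom × ℕ)) : goalOf (Bs ++ Cs) = goalOf Bs + goalOf Cs := by
  simp [goalOf]

theorem mem_mFV_goalOf {x : ℕ} {Bs : List (Atom × ℕ)} :
    x ∈ mFV (goalOf Bs) ↔ ∃ p ∈ Bs, x ∈ p.1.fv ∨ x = p.2 := by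
  simp [mem_mFV, goalOf, Atom.mem_fv_ext]

theorem goalOf_map_subst {μ : Subst} {Bs : List (Atom × ℕ)} (h : ∀ p ∈ Bs, μ p.2 = .var p.2) :
    goalOf (Bs.map fun p => (p.1.subst μ, p.2)) = (goalOf Bs).map (Atom.subst μ) := by
  simp only [goalOf, Multiset.map_coe, List.map_map]
  congr 1
  exact List.map_congr_left fun p hp => by simp [h p hp]

theorem LastVarsFresh.map_subst {μ : Subst} {Bs : List (Atom × ℕ)} (h : LastVarsFresh Bs)
    (hμ : ∀ p ∈ Bs, ∀ q ∈ Bs, p.2 ∈ (q.1.subst μ).fv → p.2 ∈ q.1.fv) :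
    LastVarsFresh (Bs.map fun p => (p.1.subst μ, p.2)) := by
  refine ⟨by rw [List.map_map]; exact h.1, ?_⟩
  simp only [List.mem_map]
  rintro _ ⟨p, hp, rfl⟩ _ ⟨q, hq, rfl⟩ hpq
  exact h.2 p hp q hq (hμ p hp q hq hpq)

theorem LastVarsFresh.of_cons {p : Atom × ℕ} {Bs : List (Atom × ℕ)}
    (h : LastVarsFresh (p :: Bs)) : LastVarsFresh Bs :=
  ⟨(List.nodup_cons.mp h.1).2, fun q hq r hr =>
    h.2 q (List.mem_cons_of_mem _ hq) r (List.mem_cons_of_mem _ hr)⟩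

theorem tmnf_goalOf (fsym : ℕ → ℕ) (Φ : Prog) (Bs : List (Atom × ℕ)) :
    TMNF (transProg fsym Φ) (goalOf Bs) := by
  rintro G' ⟨κ, body, head, σ, rest, hmem, hG, -⟩
  obtain ⟨body₀, head₀, ys, -, -, rfl, -⟩ := mem_transProg hmem
  have hmemG : (head₀.ext (.fn (fsym κ) (ys.map .var))).subst σ ∈ goalOf Bs :=
    hG ▸ Multiset.mem_cons_self _ _
  obtain ⟨p, -, hp⟩ := List.mem_map.mp (Multiset.mem_coe.mp hmemG)
  rw [Atom.ext_subst, Atom.ext_inj] at hp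
  simp at hp

def shiftedBody (body₀ : List Atom) (ys : List ℕ) (M : ℕ) : List (Atom × ℕ) :=
  (body₀.zip ys).map fun p => (p.1.rename (· + M), p.2 + M)

theorem goalOf_shiftedBody (body₀ : List Atom) (ys : List ℕ) (M : ℕ) :
    goalOf (shiftedBody body₀ ys M) = ↑((extBody body₀ ys).map (Atom.rename (· + M))) := by
  have hext : extBody body₀ ys = (body₀.zip ys).map fun p => p.1.ext (.var p.2) :=
    by rw [extBody, List.map_zip_eq_zipWith]; rfl
  simp only [goalOf, shiftedBody, hext, List.map_map]
  congr 1
  exact List.map_congr_left fun p _ => by simp [Atom.ext_rename]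

theorem lastVarsFresh_shiftedBody_append {body₀ : List Atom} {ys : List ℕ} {M : ℕ}
    {R : List (Atom × ℕ)} (hys : ys.Nodup) (hlen : ys.length = body₀.length)
    (hyb : ∀ y ∈ ys, ∀ B ∈ body₀, y ∉ B.fv) (hR : LastVarsFresh R)
    (hRM : ∀ p ∈ R, p.2 < M ∧ ∀ x ∈ p.1.fv, x < M) :
    LastVarsFresh (shiftedBody body₀ ys M ++ R) := by
  have hsnd : (shiftedBody body₀ ys M).map Prod.snd = ys.map (· + M) := by
    conv_rhs => rw [← List.map_snd_zip (l₁ := body₀) (l₂ := ys) hlen.le, List.map_map]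
    simp only [shiftedBody, List.map_map]
    rfl
  have hmem : ∀ p ∈ shiftedBody body₀ ys M,
      ∃ B ∈ body₀, ∃ y ∈ ys, p = (B.rename (· + M), y + M) := by
    intro p hp
    obtain ⟨⟨B, y⟩, hBy, rfl⟩ := List.mem_map.mp hp
    exact ⟨B, (List.of_mem_zip hBy).1, y, (List.of_mem_zip hBy).2, rfl⟩
  have hge : ∀ B : Atom, ∀ x ∈ (B.rename (· + M)).fv, M ≤ x := by
    intro B x hx
    obtain ⟨y, -, rfl⟩ := Atom.mem_fv_rename.mp hx
    exact Nat.le_add_left M y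
  refine ⟨?_, fun p hp q hq => ?_⟩
  · rw [List.map_append, hsnd, List.nodup_append]
    refine ⟨hys.map (add_left_injective M), hR.1, fun a ha b hb => ?_⟩
    obtain ⟨y, -, rfl⟩ := List.mem_map.mp ha
    obtain ⟨p, hp, rfl⟩ := List.mem_map.mp hb
    have := (hRM p hp).1
    omega
  rcases List.mem_append.mp hp with hp | hp <;> rcases List.mem_append.mp hq with hq | hq
  · obtain ⟨-, -, y, hy, rfl⟩ := hmem p hp
    obtain ⟨B, hB, -, -, rfl⟩ := hmem q hq
    intro hyB
    obtain ⟨x, hx, hxy⟩ := Atom.mem_fv_rename.mp hyB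
    exact hyb y hy B hB (Nat.add_right_cancel hxy ▸ hx)
  · obtain ⟨-, -, y, -, rfl⟩ := hmem p hp
    exact fun hyq => by have := (hRM q hq).2 _ hyq; omega
  · obtain ⟨B, -, -, -, rfl⟩ := hmem q hq
    exact fun hpB => by have := hge B _ hpB; have := (hRM p hp).1; omega
  · exact hR.2 p hp q hq

theorem LastVarsFresh.update_subst {Bs : List (Atom × ℕ)} {μ : Subst} {V : Finset ℕ} {u : ℕ}
    {t : Tm} (h : LastVarsFresh Bs) (hconf : μ.ConfinedTo V)
    (hBs : ∀ p ∈ Bs, p.2 ∉ V ∧ p.2 ≠ u ∧ u ∉ p.1.fv) :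
    LastVarsFresh (Bs.map fun p => (p.1.subst (Function.update μ u t), p.2)) ∧
      goalOf (Bs.map fun p => (p.1.subst (Function.update μ u t), p.2)) =
        (goalOf Bs).map (Atom.subst (Function.update μ u t)) := by
  have hsubst : ∀ p ∈ Bs, p.1.subst (Function.update μ u t) = p.1.subst μ := fun p hp =>
    Atom.subst_congr fun z hz => Function.update_of_ne (by rintro rfl; exact (hBs p hp).2.2 hz) _ _
  refine ⟨h.map_subst fun p hp q hq hpq => ?_, goalOf_map_subst fun p hp => ?_⟩
  · rwa [hsubst q hq, hconf.mem_fv_atom_subst_iff (hBs p hp).1] at hpq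
  · rw [Function.update_of_ne (hBs p hp).2.1]
    exact hconf.1 _ (hBs p hp).1

theorem notMem_fv_rename_add_union {H A : Atom} {M x : ℕ} (hhigh : ∀ z ∈ H.fv, z + M ≠ x)
    (hlow : x ∉ A.fv) : x ∉ (H.rename (· + M)).fv ∪ A.fv := fun h => by
  rcases Finset.mem_union.mp h with h | h
  · obtain ⟨z, hz, rfl⟩ := Atom.mem_fv_rename.mp h
    exact hhigh z hz rfl
  · exact hlow h

theorem shiftedBody_append_avoids {A head₀ : Atom} {u M : ℕ} {body₀ : List Atom} {ys : List ℕ}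
    {R : List (Atom × ℕ)} (hinv : LastVarsFresh ((A, u) :: R))
    (hM : ∀ p ∈ (A, u) :: R, p.2 < M ∧ ∀ x ∈ p.1.fv, x < M) (hys : ∀ y ∈ ys, y ∉ head₀.fv) :
    ∀ p ∈ shiftedBody body₀ ys M ++ R,
      p.2 ∉ (head₀.rename (· + M)).fv ∪ A.fv ∧ p.2 ≠ u ∧ u ∉ p.1.fv := by
  have huM := (hM _ List.mem_cons_self).1
  intro p hp
  rcases List.mem_append.mp hp with hp | hp
  · obtain ⟨⟨B, y⟩, hBy, rfl⟩ := List.mem_map.mp hp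
    have hy := (List.of_mem_zip hBy).2
    refine ⟨notMem_fv_rename_add_union (fun z hz hzy => by
        obtain rfl : z = y := Nat.add_right_cancel hzy
        exact hys z hy hz)
        (fun h => by have := (hM _ List.mem_cons_self).2 _ h; omega),
      by dsimp only; omega, fun h => ?_⟩
    obtain ⟨z, -, hz⟩ := Atom.mem_fv_rename.mp h
    omega
  have hp' := List.mem_cons_of_mem (A, u) hp
  have hpR := List.mem_map_of_mem (f := Prod.snd) hp
  refine ⟨notMem_fv_rename_add_union (fun z _ => by have := (hM p hp').1; omega)
    (hinv.2 p hp' _ List.mem_cons_self), fun h => ?_, hinv.2 _ List.mem_cons_self p hp'⟩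
  exact (List.nodup_cons.mp hinv.1).1 (h ▸ hpR)

theorem exists_isMGU_rename_ext {head₀ A : Atom} {c u M : ℕ} {ys : List ℕ} {σ δ : Subst}
    (hmatch : (head₀.ext (.fn c (ys.map .var))).subst σ = (A.ext (.var u)).subst δ)
    (hM : ∀ v ∈ (A.ext (.var u)).fv, v < M) (hu : u ∉ A.fv) (hys : ∀ y ∈ ys, y ∉ head₀.fv) :
    ∃ μ : Subst, IsMGU (Function.update μ u (.fn c (ys.map fun y => .var (y + M))))
        ((head₀.ext (.fn c (ys.map .var))).rename (· + M)) (A.ext (.var u)) ∧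
      μ.ConfinedTo ((head₀.rename (· + M)).fv ∪ A.fv) := by
  have huM : u < M := hM u (Atom.mem_fv_ext.mpr (.inr (by simp)))
  set t : Tm := .fn c (ys.map fun y => .var (y + M))
  have hhead : (head₀.ext (.fn c (ys.map .var))).rename (· + M) = (head₀.rename (· + M)).ext t := by
    simp [Atom.ext_rename, t, List.map_map, Function.comp_def]
  have ht : ∀ z ∈ t.fv, ∃ y ∈ ys, z = y + M := fun z hz => by
    simpa [t, Tm.mem_fv_fn, eq_comm] using hz
  obtain ⟨μ, hμ, hconf⟩ := exists_isMGU_confinedTo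
    ⟨_, (unifies_ext_iff.mp (hhead ▸ unifies_shift hmatch hM)).1⟩
  refine ⟨μ, hhead ▸ isMGU_update_ext hμ hconf ?_ ?_ ?_, hconf⟩
  · exact notMem_fv_rename_add_union (fun z _ => by omega) hu
  · intro z hz
    obtain ⟨y, hy, rfl⟩ := ht z hz
    refine notMem_fv_rename_add_union
      (fun z hz hzy => hys y hy (Nat.add_right_cancel hzy ▸ hz)) fun h => ?_
    have := hM _ (Atom.mem_fv_ext.mpr (.inl h))
    omega
  · intro hz
    obtain ⟨y, -, h⟩ := ht u hz
    omega

theorem exists_unifStep_of_match {fsym : ℕ → ℕ} {Φ : Prog} {κ : ℕ} {body : List Atom}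
    {head A : Atom} {u : ℕ} {R : List (Atom × ℕ)} {σ δ : Subst}
    (hmem : (κ, body, head) ∈ transProg fsym Φ)
    (hmatch : head.subst σ = (A.ext (.var u)).subst δ) (hinv : LastVarsFresh ((A, u) :: R)) :
    ∃ γ Bs θ, UnifStepL (transProg fsym Φ) κ γ (goalOf ((A, u) :: R)) (goalOf Bs) ∧
      LastVarsFresh Bs ∧
      (goalOf Bs).map (Atom.subst θ) =
        ↑(body.map (Atom.subst σ)) + (goalOf R).map (Atom.subst δ) := by
  obtain ⟨body₀, head₀, ys, -, rfl, rfl, hys, hlen, hysfresh⟩ := mem_transProg hmem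
  obtain ⟨M, hM⟩ : ∃ M, ∀ v ∈ mFV (A.ext (.var u) ::ₘ goalOf R), v < M :=
    ⟨_, fun v hv => Nat.lt_succ_of_le (Finset.le_sup (f := id) hv)⟩
  have hgoalM : ∀ p ∈ (A, u) :: R, p.2 < M ∧ ∀ x ∈ p.1.fv, x < M := fun p hp =>
    ⟨hM _ (mem_mFV_goalOf.mpr ⟨p, hp, .inr rfl⟩),
      fun x hx => hM x (mem_mFV_goalOf.mpr ⟨p, hp, .inl hx⟩)⟩
  have hyhead : ∀ y ∈ ys, y ∉ head₀.fv := fun y hy => hysfresh y hy ∘ Finset.mem_union_right _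
  obtain ⟨μ, hμ₀, hconf⟩ := exists_isMGU_rename_ext (M := M) hmatch
    (fun v hv => hM v (mem_mFV.mpr ⟨_, Multiset.mem_cons_self _ _, hv⟩))
    (hinv.2 _ List.mem_cons_self _ List.mem_cons_self) hyhead
  obtain ⟨hstep, θ, hθ⟩ := UnifStepL.of_match hmem hM hmatch hμ₀
  have hpre := lastVarsFresh_shiftedBody_append hys hlen
    (fun y hy B hB hyB => hysfresh y hy (Finset.mem_union_left _ (mem_listFV.mpr ⟨B, hB, hyB⟩)))
    hinv.of_cons fun p hp => hgoalM p (List.mem_cons_of_mem _ hp)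
  set t : Tm := .fn (fsym κ) (ys.map fun y => .var (y + M))
  obtain ⟨hinv', hgoal⟩ := LastVarsFresh.update_subst (t := t) hpre hconf
    (shiftedBody_append_avoids hinv hgoalM hyhead)
  refine ⟨Function.update μ u t, _, θ, ?_, hinv', ?_⟩
  · rwa [hgoal, goalOf_append, goalOf_shiftedBody, Multiset.map_add, Multiset.map_coe]
  · rwa [hgoal, goalOf_append, goalOf_shiftedBody, Multiset.map_add, Multiset.map_coe]

def NormalUnifR (Ψ : Prog) (p q : Multiset Atom × Subst) : Prop := unifR Ψ p q ∧ TMNF Ψ q.1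

theorem structR_path_of_normalUnifR_path {Ψ : Prog} {p q : Multiset Atom × Subst}
    (h : Relation.ReflTransGen (NormalUnifR Ψ) p q) (hp : TMNF Ψ p.1) :
    Relation.ReflTransGen (structR Ψ) p q := by
  induction h using Relation.ReflTransGen.head_induction_on with
  | refl => exact .refl
  | @head a c hstep _ ih =>
    obtain ⟨⟨κ, γ, hU, hq⟩, hnf⟩ := hstep
    have hsub : structR Ψ a (a.1.map (Atom.subst γ), Subst.comp γ a.2) :=
      ⟨_, .refl, hp, .inr ⟨κ, γ, hU.subStepL, rfl⟩⟩
    have htm : structR Ψ (a.1.map (Atom.subst γ), Subst.comp γ a.2) c :=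
      ⟨_, .single hU.tmred, hnf, .inl ⟨rfl, hq⟩⟩
    exact .head hsub (.head htm (ih hnf))

theorem exists_normalUnifR_path {fsym : ℕ → ℕ} {Φ : Prog} {Bs : List (Atom × ℕ)}
    (hinv : LastVarsFresh Bs) (hsolv : Solvable (transProg fsym Φ) (goalOf Bs)) (s : Subst) :
    ∃ γ, Relation.ReflTransGen (NormalUnifR (transProg fsym Φ)) (goalOf Bs, s) (0, γ) := by
  obtain ⟨δ, hδ⟩ := hsolv
  induction hn : totalProofSize (transProg fsym Φ) ((goalOf Bs).map (Atom.subst δ))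
    using Nat.strong_induction_on generalizing Bs δ s with
  | _ n ih =>
  match Bs, hinv with
  | [], _ => exact ⟨s, .refl⟩
  | (A, u) :: R, hinv =>
    rw [goalOf_cons, Multiset.map_cons] at hδ hn
    obtain ⟨κ, body, head, σ, hmem, hmatch, hbody, hlt⟩ :=
      (hδ _ (Multiset.mem_cons_self _ _)).exists_rule
    obtain ⟨γ, Bs', θ, hstep, hinv', hθ⟩ := exists_unifStep_of_match hmem hmatch hinv
    have hrest : ∀ X ∈ (goalOf R).map (Atom.subst δ), Provable (transProg fsym Φ) X :=
      fun X hX => hδ X (Multiset.mem_cons_of_mem hX)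
    have hprov : AllProvable (transProg fsym Φ) ((goalOf Bs').map (Atom.subst θ)) := by
      rw [hθ]
      intro X hX
      rcases Multiset.mem_add.mp hX with hX | hX
      · obtain ⟨B, hB, rfl⟩ := List.mem_map.mp (Multiset.mem_coe.mp hX)
        exact hbody B hB
      · exact hrest X hX
    have hsize : totalProofSize (transProg fsym Φ) ((goalOf Bs').map (Atom.subst θ)) < n := by
      rw [← hn, hθ, totalProofSize_add, totalProofSize_cons, totalProofSize_coe, List.map_map]
      exact Nat.add_lt_add_right hlt _
    obtain ⟨γ', hpath⟩ := ih _ hsize hinv' (Subst.comp γ s) θ hprov rfl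
    exact ⟨γ', .head ⟨⟨κ, γ, hstep, rfl⟩, tmnf_goalOf fsym Φ Bs'⟩ hpath⟩

theorem struct_unif_equiv_general (fsym : ℕ → ℕ) (Φ : Prog)
    (A : Atom) (y : ℕ) (hy : y ∉ A.fv) :
    UnifSucc (transProg fsym Φ) {A.ext (Tm.var y)} ↔
      StructSucc (transProg fsym Φ) {A.ext (Tm.var y)} := by
  have hinv : LastVarsFresh [(A, y)] := ⟨List.nodup_singleton y, by simpa using hy⟩
  have complete := fun h => exists_normalUnifR_path (fsym := fsym) (Φ := Φ) hinv h Subst.id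
  constructor
  · rintro ⟨_, hpath⟩
    obtain ⟨γ, h⟩ := complete (solvable_of_unifR_path hpath rfl)
    exact ⟨γ, structR_path_of_normalUnifR_path h (tmnf_goalOf fsym Φ [(A, y)])⟩
  · rintro ⟨_, hpath⟩
    obtain ⟨γ, h⟩ := complete (solvable_of_structR_path hpath rfl)
    exact ⟨γ, Relation.ReflTransGen.mono (fun _ _ hpq => hpq.1) _ _ h⟩

/-- Equivalence of LP-Struct and LP-Unif after the realizability
transformation: `F(Φ) ⊢ {A[y]} ⇝* ∅` iff `F(Φ) ⊢ {A[y]} (→^ν·↪^1)* ∅`. -/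
theorem struct_unif_equiv (fsym : ℕ → ℕ) (Φ : Prog) (hf : FreshSyms fsym Φ)
    (A : Atom) (y : ℕ) (hy : y ∉ A.fv) :
    UnifSucc (transProg fsym Φ) {A.ext (Tm.var y)} ↔
      StructSucc (transProg fsym Φ) {A.ext (Tm.var y)} :=
  struct_unif_equiv_general fsym Φ A y hy

end SRes
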